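/- Let F be a closed subspace of a Hilbert space E with orthogonal projection Pr_F, and define pr_F : G²(E) → G²(F) by pr_F(x + x⁽²⁾) = Pr_F x + Pr_F x⁽²⁾ Pr_F. Then pr_F is a group homomorphism: pr_F(𝐱·𝐲) = pr_F(𝐱)·pr_F(𝐲). -/

import Mathlib

/-! Conjugating the wedge by a symmetric operator `P` gives `P (x ∧ y) P = P x ∧ P y`, because
`⟪x, P v⟫ = ⟪P x, v⟫`; every other term of the product is linear, and an orthogonal projection
is symmetric. -/

open RealInnerProductSpace

variable {E : Type*} [NormedAddCommGroup E] [InnerProductSpace ℝ E]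

/-- The wedge `x ∧ y = x* ⊗ y − y* ⊗ x`: `(x ∧ y) v = ⟪x, v⟫ y − ⟪y, v⟫ x`. -/
noncomputable def wedge (x y : E) : E →L[ℝ] E :=
  (innerSL ℝ x).smulRight y - (innerSL ℝ y).smulRight x

/-- The group product of `G²(E)` in exponential coordinates `E ⊕ so(E)`:
`(x + x⁽²⁾)·(y + y⁽²⁾) = x + y + x⁽²⁾ + y⁽²⁾ + ½ x ∧ y`. -/
noncomputable def gmul (p q : E × (E →L[ℝ] E)) : E × (E →L[ℝ] E) :=
  (p.1 + q.1, p.2 + q.2 + ((1:ℝ) / 2) • wedge p.1 q.1)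

def conjMap (P : E →L[ℝ] E) (r : E × (E →L[ℝ] E)) : E × (E →L[ℝ] E) :=
  (P r.1, P.comp (r.2.comp P))

theorem comp_wedge_comp_of_isSymmetric {P : E →L[ℝ] E} (hP : (P : E →ₗ[ℝ] E).IsSymmetric)
    (x y : E) : P.comp ((wedge x y).comp P) = wedge (P x) (P y) := by
  have hP' : ∀ a b, ⟪P a, b⟫ = ⟪a, P b⟫ := hP
  ext v
  simp only [wedge, ContinuousLinearMap.comp_apply, sub_apply,
    ContinuousLinearMap.smulRight_apply, innerSL_apply_apply, map_sub, map_smul]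
  rw [hP', hP']

theorem conjMap_gmul_of_isSymmetric {P : E →L[ℝ] E} (hP : (P : E →ₗ[ℝ] E).IsSymmetric)
    (p q : E × (E →L[ℝ] E)) : conjMap P (gmul p q) = gmul (conjMap P p) (conjMap P q) := by
  simp only [conjMap, gmul, map_add, ContinuousLinearMap.add_comp, ContinuousLinearMap.comp_add,
    ContinuousLinearMap.smul_comp, ContinuousLinearMap.comp_smul,
    comp_wedge_comp_of_isSymmetric hP]

/-- For a closed subspace `F ≤ E` with orthogonal projection `Pr_F`, the map
`pr_F(x + x⁽²⁾) = Pr_F x + Pr_F x⁽²⁾ Pr_F` is a group homomorphism on `G²(E)`. -/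
theorem stmt_10 [CompleteSpace E] (K : Submodule ℝ E) (hK : IsClosed (K : Set E)) :
    haveI : CompleteSpace K := hK.completeSpace_coe
    ∀ P : E →L[ℝ] E, P = K.subtypeL.comp (K.orthogonalProjectionOnto) →
      ∀ p q : E × (E →L[ℝ] E),
        (fun r : E × (E →L[ℝ] E) => (P r.1, P.comp (r.2.comp P))) (gmul p q) =
          gmul ((fun r : E × (E →L[ℝ] E) => (P r.1, P.comp (r.2.comp P))) p)
               ((fun r : E × (E →L[ℝ] E) => (P r.1, P.comp (r.2.comp P))) q) := by
  have : CompleteSpace K := hK.completeSpace_coe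
  rintro P rfl p q
  exact conjMap_gmul_of_isSymmetric K.starProjection_isSymmetric p q
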